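/- arXiv:2111.15609 — 7 statements merged into one kernel-verified Lean document; each statement's English description precedes it below -/
import Mathlib

section
/- In the free group on two generators a, b, the element a⁻¹ lies in the submonoid generated by the set {a, a⁻¹, b, bab⁻¹}, but b⁻¹ does not lie in this submonoid. -/
theorem stmt_2 :
    let a : FreeGroup (Fin 2) := FreeGroup.of 0
    let b : FreeGroup (Fin 2) := FreeGroup.of 1
    a⁻¹ ∈ Submonoid.closure {a, a⁻¹, b, b * a * b⁻¹} ∧
      b⁻¹ ∉ Submonoid.closure {a, a⁻¹, b, b * a * b⁻¹} := by
  intro a b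
  constructor
  · exact Submonoid.subset_closure (by simp)
  · intro h
    set φ : FreeGroup (Fin 2) →* Multiplicative ℤ :=
      (FreeGroup.lift (fun i => if i = 0 then 1 else Multiplicative.ofAdd 1)) with hφ
    have key : ∀ x ∈ Submonoid.closure {a, a⁻¹, b, b * a * b⁻¹},
        (0:ℤ) ≤ Multiplicative.toAdd (φ x) := by
      intro x hx
      induction hx using Submonoid.closure_induction with
      | mem y hy =>
        simp only [Set.mem_insert_iff, Set.mem_singleton_iff] at hy
        rcases hy with rfl | rfl | rfl | rfl <;> simp [hφ, a, b]
      | one => simp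
      | mul x y _ _ hx hy =>
        rw [map_mul, toAdd_mul]; omega
    have h2 := key b⁻¹ h
    simp [hφ, b] at h2
end

section
/- Let F be the free group on a, b and X = {a, ab, aba⁻¹, aba⁻¹b⁻¹, b, ba, bab⁻¹, bab⁻¹a⁻¹} the set of nonempty prefixes of [a,b] and of [b,a]. If a product p₁p₂⋯pₙ with each pᵢ ∈ X equals 1 in F, then every pᵢ is equal to aba⁻¹b⁻¹ or bab⁻¹a⁻¹. -/
/-! Every element of `X` has exponent sum `1` or `2` in the generators, except the two
commutators, whose exponent sum is `0`. Exponent sum is a homomorphism to `ℤ`, so a trivial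
product of elements of `X` has exponent sums adding up to `0`; being nonnegative, they all
vanish, and every factor is a commutator. -/

theorem MonoidHom.eq_one_of_mem_of_prod_eq_one {M N : Type*} [Monoid M] [CommMonoid N]
    [PartialOrder N] [IsOrderedMonoid N] (φ : M →* N) {l : List M} (hl : l.prod = 1)
    (hφ : ∀ p ∈ l, 1 ≤ φ p) {p : M} (hp : p ∈ l) : φ p = 1 :=
  List.all_one_of_le_one_le_of_prod_eq_one (by simpa using hφ)
    (by rw [← map_list_prod, hl, map_one]) (List.mem_map_of_mem hp)

namespace FreeGroup

variable {α : Type*}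

def exponentSum : FreeGroup α →* Multiplicative ℤ :=
  lift fun _ => Multiplicative.ofAdd 1

@[simp]
theorem exponentSum_of (x : α) : exponentSum (of x) = Multiplicative.ofAdd 1 :=
  lift_apply_of

end FreeGroup

open FreeGroup in
theorem stmt_4 :
    let a : FreeGroup (Fin 2) := FreeGroup.of 0
    let b : FreeGroup (Fin 2) := FreeGroup.of 1
    let X : Set (FreeGroup (Fin 2)) :=
      {a, a * b, a * b * a⁻¹, a * b * a⁻¹ * b⁻¹,
       b, b * a, b * a * b⁻¹, b * a * b⁻¹ * a⁻¹}
    ∀ l : List (FreeGroup (Fin 2)), (∀ p ∈ l, p ∈ X) → l.prod = 1 →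
      ∀ p ∈ l, p = a * b * a⁻¹ * b⁻¹ ∨ p = b * a * b⁻¹ * a⁻¹ := by
  intro a b X l hX hprod p hp
  have one_le_exponentSum : ∀ q ∈ X, 1 ≤ exponentSum q := by
    rintro q (rfl | rfl | rfl | rfl | rfl | rfl | rfl | rfl) <;>
      simp [a, b, ← ofAdd_add, ← ofAdd_neg, ← ofAdd_zero]
  have eq_commutator_of_exponentSum_eq_one :
      ∀ q ∈ X, exponentSum q = 1 → q = a * b * a⁻¹ * b⁻¹ ∨ q = b * a * b⁻¹ * a⁻¹ := by
    rintro q (rfl | rfl | rfl | rfl | rfl | rfl | rfl | rfl) <;>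
      simp [a, b, ← ofAdd_add, ← ofAdd_neg]
  exact eq_commutator_of_exponentSum_eq_one p (hX p hp) <|
    exponentSum.eq_one_of_mem_of_prod_eq_one hprod (fun q hq => one_le_exponentSum q (hX q hq)) hp
end

section
/- No nonempty product of nonempty prefixes of a reduced word over a free group's generating alphabet equals the identity: if w is a reduced word over A ∪ A⁻¹ and p₁, …, pₙ (n ≥ 1) are nonempty prefixes of w, then the product p₁p₂⋯pₙ is not equal to 1 in the free group on A. -/
/-!
Reducedness of `w` makes, for each generator `a`, the requirements "the `k`-th letter of `w`
maps `k + 1` to `k`" into a finite order-preserving partial map of `ℚ`, which extends by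
back-and-forth to an order automorphism `F a`. In the resulting action of the free group on `ℚ`
the prefix of length `j` maps `j` to `0`, so every nonempty prefix moves `1` strictly down, and
since the action is monotone so does every nonempty product of such prefixes.
-/

open Order

namespace Order.PartialIso

variable {α β : Type*} [LinearOrder α] [LinearOrder β]

theorem exists_orderIso_extend [Countable α] [DenselyOrdered α] [NoMinOrder α] [NoMaxOrder α]
    [Nonempty α] [Countable β] [DenselyOrdered β] [NoMinOrder β] [NoMaxOrder β] [Nonempty β]
    (f₀ : PartialIso α β) : ∃ F : α ≃o β, ∀ p ∈ f₀.val, F p.1 = p.2 := by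
  cases nonempty_encodable α
  cases nonempty_encodable β
  let toCofinal : α ⊕ β → Cofinal (PartialIso α β) := fun p ↦
    Sum.recOn p (definedAtLeft β) (definedAtRight α)
  let I : Ideal (PartialIso α β) := idealOfCofinals f₀ toCofinal
  let F a := funOfIdeal a I (cofinal_meets_idealOfCofinals _ toCofinal (Sum.inl a))
  let G b := invOfIdeal b I (cofinal_meets_idealOfCofinals _ toCofinal (Sum.inr b))
  refine ⟨OrderIso.ofCmpEqCmp (fun a ↦ (F a).val) (fun b ↦ (G b).val) fun a b ↦ ?_, ?_⟩
  · obtain ⟨f, hf, ha⟩ := (F a).prop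
    obtain ⟨g, hg, hb⟩ := (G b).prop
    obtain ⟨m, -, fm, gm⟩ := I.directed _ hf _ hg
    exact m.prop (a, _) (fm ha) (_, b) (gm hb)
  · intro p hp
    obtain ⟨f, hf, ha⟩ := (F p.1).prop
    obtain ⟨m, -, fm, f₀m⟩ := I.directed _ hf _ (mem_idealOfCofinals f₀ toCofinal)
    have := m.prop (p.1, (F p.1).val) (fm ha) (p.1, p.2) (f₀m hp)
    rw [cmp_self_eq_eq] at this
    exact (cmp_eq_eq_iff _ _).mp this.symm

def ofStrictMonoOn {ι : Type*} [LinearOrder ι] (s : Finset ι) (f : ι → α) (g : ι → β)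
    (hf : StrictMonoOn f s) (hg : StrictMonoOn g s) : PartialIso α β :=
  ⟨s.image fun i ↦ (f i, g i), by
    simp only [Finset.mem_image, forall_exists_index, and_imp]
    rintro _ i hi rfl _ j hj rfl
    rw [hf.cmp_map_eq hi hj, hg.cmp_map_eq hi hj]⟩

theorem mem_ofStrictMonoOn {ι : Type*} [LinearOrder ι] {s : Finset ι} {f : ι → α} {g : ι → β}
    {hf : StrictMonoOn f s} {hg : StrictMonoOn g s} {i : ι} (hi : i ∈ s) :
    (f i, g i) ∈ (ofStrictMonoOn s f g hf hg).val :=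
  Finset.mem_image_of_mem _ hi

end Order.PartialIso

theorem OrderIso.list_prod_apply_lt {α : Type*} [Preorder α] {a : α} :
    ∀ {L : List (α ≃o α)}, L ≠ [] → (∀ f ∈ L, f a < a) → L.prod a < a
  | [], hL, _ => absurd rfl hL
  | f :: t, _, h => by
    have ht : t.prod a ≤ a := by
      rcases eq_or_ne t [] with rfl | ht
      · exact le_rfl
      · exact (list_prod_apply_lt ht fun g hg ↦ h g (List.mem_cons_of_mem _ hg)).le
    calc (f :: t).prod a = f (t.prod a) := by rw [List.prod_cons, RelIso.mul_apply]
      _ ≤ f a := f.monotone ht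
      _ < a := h f List.mem_cons_self

namespace FreeGroup

variable {A : Type*}

/-- The pair `(x, y)` such that `a x = y` says that the letter `(a, b)` maps `k + 1` to `k`. -/
def letterEdge (k : ℕ) (b : Bool) : ℚ × ℚ :=
  bif b then ((k : ℚ) + 1, k) else (k, (k : ℚ) + 1)

theorem letterEdge_lt_letterEdge {k k' : ℕ} {b b' : Bool} (hk : k < k')
    (hb : k + 1 = k' → b = b') :
    (letterEdge k b).1 < (letterEdge k' b').1 ∧ (letterEdge k b).2 < (letterEdge k' b').2 := by
  rcases (Nat.succ_le_of_lt hk).lt_or_eq with hlt | rfl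
  · have : (k : ℚ) + 1 < k' := by exact_mod_cast hlt
    cases b <;> cases b' <;> simp only [letterEdge, cond_true, cond_false] <;>
      constructor <;> linarith
  · obtain rfl := hb rfl
    cases b <;> simp [letterEdge]

theorem IsReduced.letterEdge_lt_of_fst_eq {w : List (A × Bool)} (hw : IsReduced w)
    {k k' : Fin w.length} (ha : w[k].1 = w[k'].1) (hk : k < k') :
    (letterEdge k w[k].2).1 < (letterEdge k' w[k'].2).1 ∧
      (letterEdge k w[k].2).2 < (letterEdge k' w[k'].2).2 := by
  refine letterEdge_lt_letterEdge hk fun hsucc ↦ ?_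
  obtain ⟨k', hk'⟩ := k'
  subst hsucc
  exact List.IsChain.getElem hw k hk' ha

open Classical in
noncomputable def IsReduced.letterPartialIso {w : List (A × Bool)} (hw : IsReduced w) (a : A) :
    PartialIso ℚ ℚ :=
  PartialIso.ofStrictMonoOn {k : Fin w.length | w[k].1 = a}
    (fun k ↦ (letterEdge k w[k].2).1) (fun k ↦ (letterEdge k w[k].2).2)
    (fun _ hi _ hj hk ↦ (hw.letterEdge_lt_of_fst_eq (by simp_all) hk).1)
    (fun _ hi _ hj hk ↦ (hw.letterEdge_lt_of_fst_eq (by simp_all) hk).2)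

theorem IsReduced.exists_hom_orderIso_apply_length {w : List (A × Bool)} (hw : IsReduced w) :
    ∃ φ : FreeGroup A →* (ℚ ≃o ℚ), ∀ p, p <+: w → φ (mk p) p.length = 0 := by
  choose F hF using fun a ↦ PartialIso.exists_orderIso_extend (hw.letterPartialIso a)
  have hletter (k : ℕ) (hk : k < w.length) : lift F (mk [w[k]]) (k + 1) = k := by
    have : F w[k].1 (letterEdge k w[k].2).1 = (letterEdge k w[k].2).2 :=
      hF _ _ (PartialIso.mem_ofStrictMonoOn (i := (⟨k, hk⟩ : Fin w.length)) (by simp))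
    rcases hb : w[k].2 <;> simp only [hb, letterEdge, cond_true, cond_false] at this <;>
      simp only [lift_mk, hb, List.map_cons, List.map_nil, List.prod_singleton, cond_true,
        cond_false]
    · rw [← this, RelIso.inv_apply_self]
    · exact this
  have htake (j : ℕ) (hj : j ≤ w.length) : lift F (mk (w.take j)) j = 0 := by
    induction j with
    | zero => simp
    | succ j ih =>
      rw [List.take_succ_eq_append_getElem hj, ← mul_mk, (lift F).map_mul, RelIso.mul_apply,
        Nat.cast_succ, hletter j hj, ih (by omega)]
  refine ⟨lift F, fun p hp ↦ ?_⟩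
  have := htake p.length hp.length_le
  rwa [← List.prefix_iff_eq_take.mp hp] at this

end FreeGroup

theorem stmt_5_general {A : Type*} [DecidableEq A] (w : List (A × Bool))
    (hred : FreeGroup.reduce w = w)
    (l : List (List (A × Bool))) (hl : l ≠ [])
    (hpre : ∀ p ∈ l, p ≠ [] ∧ ∃ j : ℕ, p = w.take j) :
    (l.map FreeGroup.mk).prod ≠ 1 := by
  obtain ⟨φ, hφ⟩ := (FreeGroup.IsReduced.of_reduce_eq hred).exists_hom_orderIso_apply_length
  have hprefix : ∀ f ∈ l.map (φ ∘ FreeGroup.mk), f 1 < 1 := by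
    simp only [List.mem_map, Function.comp_apply, forall_exists_index, and_imp,
      forall_apply_eq_imp_iff₂]
    intro p hp
    obtain ⟨hne, j, rfl⟩ := hpre p hp
    calc φ (FreeGroup.mk (w.take j)) 1
        ≤ φ (FreeGroup.mk (w.take j)) (w.take j).length :=
          (φ _).monotone (by exact_mod_cast List.length_pos_iff.2 hne)
      _ = 0 := hφ _ (List.take_prefix j w)
      _ < 1 := one_pos
  intro h
  have := OrderIso.list_prod_apply_lt (by simpa using hl) hprefix
  rw [← List.map_map, ← map_list_prod, h, φ.map_one, RelIso.one_apply] at this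
  exact lt_irrefl _ this

theorem stmt_5 {A : Type*} [DecidableEq A] (w : List (A × Bool))
    (hred : FreeGroup.reduce w = w) (hw : w ≠ [])
    (l : List (List (A × Bool))) (hl : l ≠ [])
    (hpre : ∀ p ∈ l, p ≠ [] ∧ ∃ j : ℕ, p = w.take j) :
    (l.map FreeGroup.mk).prod ≠ 1 :=
  stmt_5_general w hred l hl hpre
end

section
/- The group presented by ⟨a, b | a²b²a²bab = 1⟩ is isomorphic to the trefoil knot group ⟨x, y | x² = y³⟩. -/
theorem stmt_12 :
    let a : FreeGroup (Fin 2) := FreeGroup.of 0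
    let b : FreeGroup (Fin 2) := FreeGroup.of 1
    Nonempty
      (PresentedGroup ({a * a * b * b * a * a * b * a * b} : Set (FreeGroup (Fin 2))) ≃*
        PresentedGroup ({a * a * b⁻¹ * b⁻¹ * b⁻¹} : Set (FreeGroup (Fin 2)))) := by
  intro a b
  set S1 : Set (FreeGroup (Fin 2)) := {a * a * b * b * a * a * b * a * b} with hS1
  set S2 : Set (FreeGroup (Fin 2)) := {a * a * b⁻¹ * b⁻¹ * b⁻¹} with hS2
  -- generators of the two presented groups
  set A : PresentedGroup S1 := PresentedGroup.of 0 with hA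
  set B : PresentedGroup S1 := PresentedGroup.of 1 with hB
  set x : PresentedGroup S2 := PresentedGroup.of 0 with hx
  set y : PresentedGroup S2 := PresentedGroup.of 1 with hy
  -- the relations hold in the presented groups
  have h1 : A * A * B * B * A * A * B * A * B = 1 := by
    have : PresentedGroup.mk S1 (a * a * b * b * a * a * b * a * b) = 1 :=
      (QuotientGroup.eq_one_iff _).2 (Subgroup.subset_normalClosure rfl)
    simpa [a, b, map_mul, PresentedGroup.of, hA, hB] using this
  have h2 : x * x * y⁻¹ * y⁻¹ * y⁻¹ = 1 := by
    have : PresentedGroup.mk S2 (a * a * b⁻¹ * b⁻¹ * b⁻¹) = 1 :=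
      (QuotientGroup.eq_one_iff _).2 (Subgroup.subset_normalClosure rfl)
    simpa [a, b, map_mul, map_inv, PresentedGroup.of, hx, hy] using this
  have hxy : x * x = y * y * y := by
    calc x * x = (x * x * y⁻¹ * y⁻¹ * y⁻¹) * (y * y * y) := by group
    _ = y * y * y := by rw [h2, one_mul]
  -- the forward map: a ↦ x²y⁻¹, b ↦ yx⁻¹yx⁻²
  have hf : ∀ r ∈ S1,
      FreeGroup.lift (fun i : Fin 2 => if i = 0 then x * x * y⁻¹ else y * x⁻¹ * y * x⁻¹ * x⁻¹)
        r = 1 := by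
    intro r hr
    rw [Set.mem_singleton_iff.1 hr]
    simp only [a, b, map_mul, FreeGroup.lift_apply_of, if_pos, if_neg (by decide : (1 : Fin 2) ≠ 0),
      reduceIte]
    calc (x * x * y⁻¹) * (x * x * y⁻¹) * (y * x⁻¹ * y * x⁻¹ * x⁻¹) * (y * x⁻¹ * y * x⁻¹ * x⁻¹) *
          (x * x * y⁻¹) * (x * x * y⁻¹) * (y * x⁻¹ * y * x⁻¹ * x⁻¹) * (x * x * y⁻¹) *
          (y * x⁻¹ * y * x⁻¹ * x⁻¹)
        = (x * x * y⁻¹ * x) * (y * (x * x)⁻¹ * (y * y)) * (x * x * y⁻¹ * x)⁻¹ := by group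
      _ = (x * x * y⁻¹ * x) * (y * (y * y * y)⁻¹ * (y * y)) * (x * x * y⁻¹ * x)⁻¹ := by rw [hxy]
      _ = 1 := by group
  -- the backward map: a ↦ aba, b ↦ baaba
  have hg : ∀ r ∈ S2,
      FreeGroup.lift (fun i : Fin 2 => if i = 0 then A * B * A else B * A * A * B * A) r = 1 := by
    intro r hr
    rw [Set.mem_singleton_iff.1 hr]
    simp only [a, b, map_mul, map_inv, FreeGroup.lift_apply_of, if_pos,
      if_neg (by decide : (1 : Fin 2) ≠ 0), reduceIte]
    calc (A * B * A) * (A * B * A) * (B * A * A * B * A)⁻¹ * (B * A * A * B * A)⁻¹ *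
          (B * A * A * B * A)⁻¹
        = (A * A * B)⁻¹ * (A * A * B * B * A * A * B * A * B)⁻¹ * (A * A * B) := by group
      _ = (A * A * B)⁻¹ * (1 : PresentedGroup S1)⁻¹ * (A * A * B) := by rw [h1]
      _ = 1 := by group
  set Φ := PresentedGroup.toGroup hf with hΦ
  set Ψ := PresentedGroup.toGroup hg with hΨ
  have eA : Φ A = x * x * y⁻¹ := by
    rw [hΦ, hA, PresentedGroup.toGroup.of, if_pos rfl]
  have eB : Φ B = y * x⁻¹ * y * x⁻¹ * x⁻¹ := by
    rw [hΦ, hB, PresentedGroup.toGroup.of, if_neg (by decide : (1 : Fin 2) ≠ 0)]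
  have ex : Ψ x = A * B * A := by
    rw [hΨ, hx, PresentedGroup.toGroup.of, if_pos rfl]
  have ey : Ψ y = B * A * A * B * A := by
    rw [hΨ, hy, PresentedGroup.toGroup.of, if_neg (by decide : (1 : Fin 2) ≠ 0)]
  have l1 : Ψ.comp Φ = MonoidHom.id _ := by
    ext i
    fin_cases i
    · show Ψ (Φ A) = A
      simp only [eA, map_mul, map_inv, ex, ey]; group
    · show Ψ (Φ B) = B
      simp only [eB, map_mul, map_inv, ex, ey]; group
  have l2 : Φ.comp Ψ = MonoidHom.id _ := by
    ext i
    fin_cases i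
    · show Φ (Ψ x) = x
      simp only [ex, map_mul, map_inv, eA, eB]; group
    · show Φ (Ψ y) = y
      simp only [ey, map_mul, map_inv, eA, eB]; group
  exact ⟨MonoidHom.toMulEquiv Φ Ψ l1 l2⟩
end

section
/- In the free group on two generators a, b, the element a⁻¹ lies in the submonoid generated by the set of all prefixes of the word a²b²a²bab together with all inverses of suffixes of a²b²a²bab. -/
theorem stmt_13 :
    let a : FreeGroup (Fin 2) := FreeGroup.of 0
    let b : FreeGroup (Fin 2) := FreeGroup.of 1
    let w : List (FreeGroup (Fin 2)) := [a, a, b, b, a, a, b, a, b]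
    a⁻¹ ∈ Submonoid.closure
      ({x | ∃ j : ℕ, x = (w.take j).prod} ∪
        {x | ∃ j : ℕ, x = ((w.drop j).prod)⁻¹}) := by
  intro a b w
  have h : a⁻¹ = ((w.drop 4).prod)⁻¹ * (w.take 4).prod * ((w.drop 7).prod)⁻¹ *
      (w.take 4).prod * ((w.drop 7).prod)⁻¹ := by
    show a⁻¹ = (a*a*b*a*b)⁻¹ * (a*a*b*b) * (a*b)⁻¹ * (a*a*b*b) * (a*b)⁻¹
    group
  rw [h]
  exact mul_mem (mul_mem (mul_mem (mul_mem
    (Submonoid.subset_closure (Or.inr ⟨4, rfl⟩))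
    (Submonoid.subset_closure (Or.inl ⟨4, rfl⟩)))
    (Submonoid.subset_closure (Or.inr ⟨7, rfl⟩)))
    (Submonoid.subset_closure (Or.inl ⟨4, rfl⟩)))
    (Submonoid.subset_closure (Or.inr ⟨7, rfl⟩))
end

section
/- In the free group on a, b, the element ba⁻¹b⁻¹a⁻¹ (the inverse of abab⁻¹) does not lie in the submonoid generated by {a, a⁻¹, b, bab⁻¹}. -/
/-- Carrier of the wreath-like group `(ℤ → ℤ) ⋊ ℤ`. -/
structure WG where
  p : ℤ → ℤ
  s : ℤ

instance : Mul WG := ⟨fun x y => ⟨fun d => x.p d + y.p (d - x.s), x.s + y.s⟩⟩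
instance : One WG := ⟨⟨fun _ => 0, 0⟩⟩
instance : Inv WG := ⟨fun x => ⟨fun d => -x.p (d + x.s), -x.s⟩⟩

lemma WG.mul_p (x y : WG) (d : ℤ) : (x * y).p d = x.p d + y.p (d - x.s) := rfl
lemma WG.mul_s (x y : WG) : (x * y).s = x.s + y.s := rfl
lemma WG.inv_p (x : WG) (d : ℤ) : (x⁻¹).p d = -x.p (d + x.s) := rfl
lemma WG.inv_s (x : WG) : (x⁻¹).s = -x.s := rfl
lemma WG.one_p (d : ℤ) : (1 : WG).p d = 0 := rfl
lemma WG.one_s : (1 : WG).s = 0 := rfl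

lemma WG.ext' {x y : WG} (h1 : ∀ d, x.p d = y.p d) (h2 : x.s = y.s) : x = y := by
  cases x; cases y; simp_all [funext_iff]

instance : Group WG where
  mul_assoc x y z := by
    refine WG.ext' (fun d => ?_) (by simp [WG.mul_s, add_assoc])
    simp only [WG.mul_p, WG.mul_s]
    have : d - x.s - y.s = d - (x.s + y.s) := by ring
    rw [this, add_assoc]
  one_mul x := by
    refine WG.ext' (fun d => ?_) (by simp [WG.mul_s, WG.one_s])
    simp [WG.mul_p, WG.one_p, WG.one_s]
  mul_one x := by
    refine WG.ext' (fun d => ?_) (by simp [WG.mul_s, WG.one_s])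
    simp [WG.mul_p, WG.one_p]
  inv_mul_cancel x := by
    refine WG.ext' (fun d => ?_) (by simp [WG.mul_s, WG.inv_s, WG.one_s])
    simp only [WG.mul_p, WG.inv_p, WG.inv_s, WG.one_p]
    have h : d - -x.s = d + x.s := by ring
    rw [h, neg_add_cancel]

/-- The invariant submonoid. -/
def WM : Submonoid WG where
  carrier := {x | 0 ≤ x.s ∧ 0 ≤ x.p (x.s + 1) ∧ ∀ d, x.s + 1 < d → x.p d = 0}
  one_mem' := ⟨le_refl 0, by rw [WG.one_p], fun d _ => WG.one_p d⟩
  mul_mem' := by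
    rintro x y ⟨hx2, hx1, hx0⟩ ⟨hy2, hy1, hy0⟩
    refine ⟨by rw [WG.mul_s]; omega, ?_, ?_⟩
    · rw [WG.mul_p, WG.mul_s]
      have h1 : (0:ℤ) ≤ x.p (x.s + y.s + 1) := by
        rcases eq_or_lt_of_le hy2 with h | h
        · rw [← h]; simpa using hx1
        · rw [hx0]; omega
      have h2 : x.s + y.s + 1 - x.s = y.s + 1 := by ring
      rw [h2]
      omega
    · intro d hd
      rw [WG.mul_s] at hd
      rw [WG.mul_p, hx0 d (by omega), hy0 (d - x.s) (by omega), add_zero]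

def genA : WG := ⟨fun d => if d = 0 then 1 else 0, 0⟩
def genB : WG := ⟨fun _ => 0, 1⟩

noncomputable def phi : FreeGroup (Fin 2) →* WG := FreeGroup.lift ![genA, genB]

theorem stmt_15 :
    let a : FreeGroup (Fin 2) := FreeGroup.of 0
    let b : FreeGroup (Fin 2) := FreeGroup.of 1
    b * a⁻¹ * b⁻¹ * a⁻¹ ∉
      Submonoid.closure ({a, a⁻¹, b, b * a * b⁻¹} : Set (FreeGroup (Fin 2))) := by
  intro a b h
  have hphia : phi a = genA := FreeGroup.lift_apply_of
  have hphib : phi b = genB := FreeGroup.lift_apply_of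
  have hle : Submonoid.closure ({a, a⁻¹, b, b * a * b⁻¹} : Set (FreeGroup (Fin 2))) ≤
      Submonoid.comap phi WM := by
    apply Submonoid.closure_le.mpr
    rintro s (rfl | rfl | rfl | rfl) <;>
      refine Submonoid.mem_comap.mpr ?_ <;>
      simp only [map_mul, map_inv, hphia, hphib] <;>
      refine ⟨?_, ?_, fun d hd => ?_⟩ <;>
      simp_all [genA, genB, WG.mul_p, WG.mul_s, WG.inv_p, WG.inv_s] <;>
      omega
  have hmem := Submonoid.mem_comap.mp (hle h)
  simp only [map_mul, map_inv, hphia, hphib] at hmem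
  obtain ⟨h1, h2, h3⟩ := hmem
  simp [genA, genB, WG.mul_p, WG.mul_s, WG.inv_p, WG.inv_s] at h1 h2
end

section
/- The one-relator group G = ⟨a, b | a⁻¹ = [a, bab⁻¹]⟩ (the Baumslag–Gersten group) satisfies: the generator a lies in every term of the derived series of G. -/
open scoped commutatorElement

theorem mem_derivedSeries_of_commutator_conj_mul_self_eq_one {G : Type*} [Group G] {x g : G}
    (h : ⁅x, g * x * g⁻¹⁆ * x = 1) (n : ℕ) : x ∈ derivedSeries G n := by
  have hx : x = ⁅x, g * x * g⁻¹⁆⁻¹ := eq_inv_of_mul_eq_one_right h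
  induction n with
  | zero => exact Subgroup.mem_top x
  | succ n ih =>
    rw [derivedSeries_succ, hx]
    exact inv_mem <| Subgroup.commutator_mem_commutator ih
      ((derivedSeries_normal G n).conj_mem x ih g)

theorem stmt_18 :
    let a : FreeGroup (Fin 2) := FreeGroup.of 0
    let b : FreeGroup (Fin 2) := FreeGroup.of 1
    ∀ n : ℕ,
      PresentedGroup.of (rels := ({⁅a, b * a * b⁻¹⁆ * a} : Set (FreeGroup (Fin 2)))) 0 ∈
        derivedSeries (PresentedGroup ({⁅a, b * a * b⁻¹⁆ * a} : Set (FreeGroup (Fin 2)))) n := by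
  intro a b n
  refine mem_derivedSeries_of_commutator_conj_mul_self_eq_one (g := PresentedGroup.of 1) ?_ n
  have hrel := PresentedGroup.one_of_mem (Set.mem_singleton (⁅a, b * a * b⁻¹⁆ * a))
  rwa [map_mul, map_commutatorElement, map_mul, map_mul, map_inv] at hrel
end
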